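/- Under the CFL-type condition Δt/h^α ≤ 1/(2 ε C_α (1 + 1/α − ζ(α−1))), the explicit Euler scheme for the absorbing condition is stable in the maximum norm: for every n ≥ 0, sup_{j ∈ ℤ} |P^{n+1}_j| ≤ sup_{j ∈ ℤ} |P^n_j| (for any bounded initial grid function P^0 vanishing for |j| ≥ J). -/

import Mathlib

open scoped BigOperators

/-- The constant `C_α = α Γ((1+α)/2) / (2^{1-α} √π Γ(1-α/2))`. -/
noncomputable def Cconst (α : ℝ) : ℝ :=
  α * Real.Gamma ((1 + α) / 2) /
    ((2 : ℝ) ^ (1 - α) * Real.sqrt Real.pi * Real.Gamma (1 - α / 2))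

/-- The real value of the Riemann zeta function at a real argument. -/
noncomputable def zetaR (s : ℝ) : ℝ := (riemannZeta (s : ℂ)).re

/-- The double-primed sum `Σ''_{k=a, k≠0}^{b} g(k)`: the sum over integers `a ≤ k ≤ b`,
omitting `k = 0`, where the end terms `k = a` and `k = b` carry weight `1/2`. -/
noncomputable def dsum (a b : ℤ) (g : ℤ → ℝ) : ℝ :=
  ∑ k ∈ (Finset.Icc a b).erase 0, (if k = a ∨ k = b then (1 : ℝ) / 2 else 1) * g k


/-!
With `c = Δt ε C_α`, the scheme reads
`P^{n+1}_j = (1 - 2b - d - S) P^n_j + b (P^n_{j-1} + P^n_{j+1}) + Σ''_k q_k P^n_{j+k}`,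
where `b = -c ζ(α-1) h^{-α}`, `d = (c/α)((1+jh)^{-α} + (1-jh)^{-α}) ≥ 0`, `q_k ≥ 0` and
`S = Σ''_k q_k`. Once all weights are nonnegative, `|P^{n+1}_j| ≤ (1 - d) sup |P^n| ≤ sup |P^n|`.

* `b ≥ 0` because `ζ ≤ 0` on `[-2, 1)`: on `[-2, 0)` by the functional equation and `ζ > 0` on
  `(1, 3]`; on `(0, 1)` through the continuation
  `ζ(s) = 1/(s-1) + Σ_n (n^{-s} - ∫_n^{n+1} x^{-s} dx)`, whose terms are at most
  `n^{-s} - (n+1)^{-s}`, so that `ζ(s) ≤ 1/(s-1) + 1 < 0`.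
* `1 - 2b - d - S ≥ 0` is the CFL condition, because `S + d ≤ 2 (1 + 1/α) c h^{-α}` by the
  convexity bound `Σ_{k ≤ N} k^{-1-α} + N^{-α}/α ≤ 1 + 1/α`.
-/

open Filter Topology

lemma rpow_le_add_one_rpow_sub_mul {p x : ℝ} (hp0 : 0 ≤ p) (hp1 : p ≤ 1) (hx : 0 ≤ x) :
    x ^ p ≤ (x + 1) ^ p - p * (x + 1) ^ (p - 1) := by
  have hx1 : 0 < x + 1 := by linarith
  have hb := rpow_one_add_le_one_add_mul_self (s := -(x + 1)⁻¹)
    (by rw [neg_le_neg_iff]; exact inv_le_one_of_one_le₀ (by linarith)) hp0 hp1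
  have hbase : 1 + -(x + 1)⁻¹ = x * (x + 1)⁻¹ := by field_simp; ring
  rw [hbase, Real.mul_rpow hx (inv_nonneg.2 hx1.le), Real.inv_rpow hx1.le] at hb
  have hpow := Real.rpow_pos_of_pos hx1 p
  rw [Real.rpow_sub hx1, Real.rpow_one]
  rw [mul_inv_le_iff₀ hpow] at hb
  calc x ^ p ≤ (1 + p * -(x + 1)⁻¹) * (x + 1) ^ p := hb
    _ = _ := by field_simp; ring

lemma one_add_mul_sub_one_le_rpow_of_nonpos {p r : ℝ} (hp : p ≤ 0) (hr : 0 < r) :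
    1 + p * (r - 1) ≤ r ^ p :=
  calc 1 + p * (r - 1) ≤ p * Real.log r + 1 := by
        linarith [mul_le_mul_of_nonpos_left (Real.log_le_sub_one_of_pos hr) hp]
    _ ≤ Real.exp (Real.log r * p) := by rw [mul_comm]; exact Real.add_one_le_exp _
    _ = r ^ p := (Real.rpow_def_of_pos hr p).symm

lemma add_one_rpow_sub_mul_le_rpow {p x : ℝ} (hp : p ≤ 0) (hx : 0 < x) :
    (x + 1) ^ p - p * (x + 1) ^ (p - 1) ≤ x ^ p := by
  have hx1 : 0 < x + 1 := by linarith
  have hb := one_add_mul_sub_one_le_rpow_of_nonpos hp (div_pos hx hx1)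
  rw [Real.div_rpow hx.le hx1.le, le_div_iff₀ (Real.rpow_pos_of_pos hx1 p)] at hb
  rw [Real.rpow_sub hx1, Real.rpow_one]
  calc (x + 1) ^ p - p * ((x + 1) ^ p / (x + 1)) = (1 + p * (x / (x + 1) - 1)) * (x + 1) ^ p := by
        field_simp; ring
    _ ≤ x ^ p := hb

/-- `n^{-s} - ∫_n^{n+1} x^{-s} dx`. -/
noncomputable def zetaTerm (s : ℂ) (n : ℕ) : ℂ :=
  (n : ℂ) ^ (-s) - (((n : ℂ) + 1) ^ (1 - s) - (n : ℂ) ^ (1 - s)) / (1 - s)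

lemma hasDerivAt_ofReal_cpow {x : ℝ} (hx : 0 < x) (r : ℂ) :
    HasDerivAt (fun y : ℝ => (y : ℂ) ^ r) (r * (x : ℂ) ^ (r - 1)) x := by
  simpa using ((hasDerivAt_id (x : ℂ)).cpow_const (Complex.ofReal_mem_slitPlane.2 hx)).comp_ofReal

lemma norm_ofReal_cpow_neg_sub_le {s : ℂ} (hs : -1 ≤ s.re) {a x : ℝ} (ha : 0 < a) (hax : a ≤ x) :
    ‖(x : ℂ) ^ (-s) - (a : ℂ) ^ (-s)‖ ≤ ‖s‖ * a ^ (-s.re - 1) * (x - a) := by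
  have hderiv : ∀ y ∈ Set.Icc a x,
      HasDerivWithinAt (fun y : ℝ => (y : ℂ) ^ (-s)) (-s * (y : ℂ) ^ (-s - 1)) (Set.Icc a x) y :=
    fun y hy => (hasDerivAt_ofReal_cpow (ha.trans_le hy.1) _).hasDerivWithinAt
  have hbound : ∀ y ∈ Set.Icc a x, ‖-s * (y : ℂ) ^ (-s - 1)‖ ≤ ‖s‖ * a ^ (-s.re - 1) := by
    intro y hy
    rw [norm_mul, norm_neg, Complex.norm_cpow_eq_rpow_re_of_pos (ha.trans_le hy.1)]
    simp only [Complex.sub_re, Complex.neg_re, Complex.one_re]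
    exact mul_le_mul_of_nonneg_left (Real.rpow_le_rpow_of_nonpos ha hy.1 (by linarith))
      (norm_nonneg s)
  simpa [Real.norm_eq_abs, abs_of_nonneg (sub_nonneg.2 hax)] using
    (convex_Icc a x).norm_image_sub_le_of_norm_hasDerivWithin_le hderiv hbound
      (Set.left_mem_Icc.2 hax) (Set.right_mem_Icc.2 hax)

lemma norm_zetaTerm_le {s : ℂ} (hs1 : s ≠ 1) (hs : -1 ≤ s.re) {n : ℕ} (hn : 0 < n) :
    ‖zetaTerm s n‖ ≤ ‖s‖ * (n : ℝ) ^ (-s.re - 1) := by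
  have hn0 : (0 : ℝ) < n := Nat.cast_pos.2 hn
  set G : ℝ → ℂ := fun y => (y : ℂ) ^ (1 - s) / (1 - s) - y * (n : ℂ) ^ (-s)
  have hderiv : ∀ y ∈ Set.Icc (n : ℝ) (n + 1),
      HasDerivWithinAt G ((y : ℂ) ^ (-s) - (n : ℂ) ^ (-s)) (Set.Icc (n : ℝ) (n + 1)) y := by
    intro y hy
    have hd := hasDerivAt_ofReal_cpow_const' (hn0.trans_le hy.1).ne' (r := -s)
      (by contrapose! hs1; linear_combination -hs1)
    rw [neg_add_eq_sub] at hd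
    exact (hd.sub ((hasDerivAt_id (y : ℂ)).comp_ofReal.mul_const _ |>.congr_deriv
      (one_mul _))).hasDerivWithinAt
  have hbound : ∀ y ∈ Set.Icc (n : ℝ) (n + 1),
      ‖(y : ℂ) ^ (-s) - (n : ℂ) ^ (-s)‖ ≤ ‖s‖ * (n : ℝ) ^ (-s.re - 1) := by
    intro y hy
    refine (norm_ofReal_cpow_neg_sub_le hs hn0 hy.1).trans ?_
    exact mul_le_of_le_one_right (by positivity) (by linarith [hy.2])
  have hG := (convex_Icc (n : ℝ) (n + 1)).norm_image_sub_le_of_norm_hasDerivWithin_le hderiv hbound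
    (Set.left_mem_Icc.2 (by linarith)) (Set.right_mem_Icc.2 (by linarith))
  have hGval : G (n + 1) - G n = -zetaTerm s n := by
    simp only [G, zetaTerm]; push_cast; ring
  simpa [hGval] using hG

lemma differentiableAt_zetaTerm {s : ℂ} (hs : s ≠ 1) (n : ℕ) :
    DifferentiableAt ℂ (fun w => zetaTerm w (n + 1)) s := by
  have hn : ((n + 1 : ℕ) : ℂ) ≠ 0 := Nat.cast_ne_zero.2 n.succ_ne_zero
  have hn' : ((n + 1 : ℕ) : ℂ) + 1 ≠ 0 := by exact_mod_cast (n + 1).succ_ne_zero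
  unfold zetaTerm
  refine ((differentiableAt_id.neg.const_cpow (Or.inl hn)).sub
    (((differentiableAt_const _).sub differentiableAt_id |>.const_cpow (Or.inl hn')).sub
      ((differentiableAt_const _).sub differentiableAt_id |>.const_cpow (Or.inl hn)) |>.div
      ((differentiableAt_const _).sub differentiableAt_id) (sub_ne_zero.2 hs.symm)))

lemma norm_zetaTerm_succ_le {s : ℂ} (hs1 : s ≠ 1) {δ : ℝ} (hδ : δ ≤ s.re) (hδ0 : 0 ≤ δ) (n : ℕ) :
    ‖zetaTerm s (n + 1)‖ ≤ ‖s‖ * ((n : ℝ) + 1) ^ (-δ - 1) := by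
  refine (norm_zetaTerm_le hs1 (by linarith) n.succ_pos).trans ?_
  push_cast
  gcongr
  linarith

lemma summable_add_one_rpow_neg_sub_one {δ : ℝ} (hδ : 0 < δ) :
    Summable fun n : ℕ => ((n : ℝ) + 1) ^ (-δ - 1) := by
  have := (summable_nat_add_iff 1).2 (Real.summable_nat_rpow.2 (by linarith : -δ - 1 < -1))
  simpa using this

lemma summable_zetaTerm {s : ℂ} (hs1 : s ≠ 1) (hs : 0 < s.re) :
    Summable fun n : ℕ => zetaTerm s (n + 1) :=
  .of_norm_bounded ((summable_add_one_rpow_neg_sub_one hs).mul_left ‖s‖)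
    (norm_zetaTerm_succ_le hs1 le_rfl hs.le)

/-- An analytic continuation of `riemannZeta` to `0 < re s`. -/
noncomputable def zetaCont (s : ℂ) : ℂ := 1 / (s - 1) + ∑' n : ℕ, zetaTerm s (n + 1)

lemma differentiableAt_zetaCont {s : ℂ} (hs1 : s ≠ 1) (hs : 0 < s.re) :
    DifferentiableAt ℂ zetaCont s := by
  set U : Set ℂ := {w | s.re / 2 < w.re} ∩ Metric.ball 0 (‖s‖ + 1) ∩ {1}ᶜ
  have hU : IsOpen U :=
    ((isOpen_lt continuous_const Complex.continuous_re).inter Metric.isOpen_ball).inter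
      isOpen_compl_singleton
  have hsU : s ∈ U := ⟨⟨by simp; linarith, by simp⟩, hs1⟩
  have htsum : DifferentiableOn ℂ (fun w => ∑' n : ℕ, zetaTerm w (n + 1)) U := by
    refine Complex.differentiableOn_tsum_of_summable_norm
      ((summable_add_one_rpow_neg_sub_one (half_pos hs)).mul_left (‖s‖ + 1))
      (fun n w hw => (differentiableAt_zetaTerm hw.2 n).differentiableWithinAt) hU ?_
    rintro n w ⟨⟨hre, hball⟩, hw1⟩
    refine (norm_zetaTerm_succ_le hw1 hre.le (by positivity) n).trans ?_
    gcongr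
    simpa using (mem_ball_zero_iff.1 hball).le
  have hpole : DifferentiableAt ℂ (fun w : ℂ => 1 / (w - 1)) s :=
    (differentiableAt_const _).div (differentiableAt_id.sub_const 1) (sub_ne_zero.2 hs1)
  exact hpole.add (htsum.differentiableAt (hU.mem_nhds hsU))

lemma sum_range_zetaTerm (s : ℂ) (N : ℕ) :
    ∑ n ∈ Finset.range N, zetaTerm s (n + 1) =
      ∑ n ∈ Finset.range N, ((n : ℂ) + 1) ^ (-s) - (((N : ℂ) + 1) ^ (1 - s) - 1) / (1 - s) := by
  induction N with
  | zero => simp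
  | succ N ih =>
    rw [Finset.sum_range_succ, Finset.sum_range_succ, ih, zetaTerm]
    push_cast
    ring

lemma zetaCont_eq_riemannZeta {s : ℂ} (hs : 1 < s.re) : zetaCont s = riemannZeta s := by
  have hs1 : s ≠ 1 := by rintro rfl; simp at hs
  have hzeta : Tendsto (fun N => ∑ n ∈ Finset.range N, ((n : ℂ) + 1) ^ (-s)) atTop
      (𝓝 (riemannZeta s)) := by
    have hsum : Summable fun n : ℕ => 1 / ((n : ℂ) + 1) ^ s :=
      (summable_nat_add_iff 1).2 (Complex.summable_one_div_nat_cpow.2 hs) |>.congr (by simp)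
    rw [zeta_eq_tsum_one_div_nat_add_one_cpow hs]
    simpa [Complex.cpow_neg] using hsum.hasSum.tendsto_sum_nat
  have hpow : Tendsto (fun N : ℕ => ((N : ℂ) + 1) ^ (1 - s)) atTop (𝓝 0) := by
    rw [tendsto_zero_iff_norm_tendsto_zero]
    have hnorm : ∀ N : ℕ, ‖((N : ℂ) + 1) ^ (1 - s)‖ = ((N : ℝ) + 1) ^ (-(s.re - 1)) := by
      intro N
      rw [show ((N : ℂ) + 1) = (((N : ℝ) + 1 : ℝ) : ℂ) by push_cast; ring,
        Complex.norm_cpow_eq_rpow_re_of_pos (by positivity)]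
      simp
    simp only [hnorm]
    exact (tendsto_rpow_neg_atTop (by linarith)).comp
      (tendsto_atTop_add_const_right _ 1 tendsto_natCast_atTop_atTop)
  have hlim := hzeta.sub ((hpow.sub_const 1).div_const (1 - s))
  simp_rw [← sum_range_zetaTerm] at hlim
  rw [zetaCont,
    tendsto_nhds_unique (summable_zetaTerm hs1 (by linarith)).hasSum.tendsto_sum_nat hlim]
  have h1s : (1 : ℂ) - s ≠ 0 := sub_ne_zero.2 hs1.symm
  have hs1' : s - 1 ≠ 0 := sub_ne_zero.2 hs1
  field_simp
  ring

lemma riemannZeta_eq_zetaCont {s : ℂ} (hs0 : 0 < s.re) (hs1 : s.re < 1) :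
    riemannZeta s = zetaCont s := by
  -- the strip is joined to the half-plane `1 < re` through the quadrant, avoiding the pole
  set Ω : Set ℂ := {w | 0 < w.re ∧ w.re < 1} ∪ {w | 0 < w.re ∧ 0 < w.im}
  have hΩ : Ω ⊆ {w | w ≠ 1 ∧ 0 < w.re} := by
    rintro w (⟨h0, h1⟩ | ⟨h0, h1⟩) <;> refine ⟨?_, h0⟩ <;> rintro rfl <;> simp at h1
  have hΩconn : IsPreconnected Ω := by
    refine IsPreconnected.union (1 / 2 + Complex.I) (by simp; norm_num) (by simp)
      ?_ ?_
    · exact ((convex_halfSpace_re_gt 0).inter (convex_halfSpace_re_lt 1)).isPreconnected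
    · exact ((convex_halfSpace_re_gt 0).inter (convex_halfSpace_im_gt 0)).isPreconnected
  have hopen : IsOpen {w : ℂ | w ≠ 1 ∧ 0 < w.re} :=
    isOpen_compl_singleton.inter (isOpen_lt continuous_const Complex.continuous_re)
  have hζ : AnalyticOnNhd ℂ riemannZeta Ω :=
    (DifferentiableOn.analyticOnNhd
      (fun w hw => (differentiableAt_riemannZeta hw.1).differentiableWithinAt) hopen).mono hΩ
  have hcont : AnalyticOnNhd ℂ zetaCont Ω :=
    (DifferentiableOn.analyticOnNhd
      (fun w hw => (differentiableAt_zetaCont hw.1 hw.2).differentiableWithinAt) hopen).mono hΩ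
  have heq : riemannZeta =ᶠ[𝓝 (2 + Complex.I)] zetaCont := by
    filter_upwards [(isOpen_lt continuous_const Complex.continuous_re).mem_nhds
      (by simp : (1 : ℝ) < (2 + Complex.I).re)] with w hw
    exact (zetaCont_eq_riemannZeta hw).symm
  exact hζ.eqOn_of_preconnected_of_eventuallyEq hcont hΩconn (Or.inr (by simp)) heq
    (Or.inl ⟨hs0, hs1⟩)

lemma zetaTerm_ofReal {t : ℝ} (n : ℕ) :
    zetaTerm t n =
      ((n : ℝ) ^ (-t) - (((n : ℝ) + 1) ^ (1 - t) - (n : ℝ) ^ (1 - t)) / (1 - t) : ℝ) := by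
  push_cast
  rw [Complex.ofReal_cpow (by positivity), Complex.ofReal_cpow (by positivity),
    Complex.ofReal_cpow (by positivity)]
  push_cast
  rfl

lemma riemannZeta_re_nonpos_of_pos {t : ℝ} (ht0 : 0 < t) (ht1 : t < 1) :
    (riemannZeta t).re ≤ 0 := by
  set a : ℕ → ℝ := fun n =>
    ((n + 1 : ℕ) : ℝ) ^ (-t)
      - ((((n + 1 : ℕ) : ℝ) + 1) ^ (1 - t) - ((n + 1 : ℕ) : ℝ) ^ (1 - t)) / (1 - t)
  have ha : ∀ n : ℕ, zetaTerm t (n + 1) = a n := fun n => zetaTerm_ofReal (n + 1)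
  have hsum : Summable a := by
    rw [← Complex.summable_ofReal]
    simpa only [← ha] using summable_zetaTerm (by simpa using ht1.ne) (by simpa using ht0)
  have hle : ∑' n, a n ≤ 1 := by
    refine hsum.tsum_le_of_sum_range_le fun N => ?_
    calc ∑ n ∈ Finset.range N, a n
        ≤ ∑ n ∈ Finset.range N, (((n : ℝ) + 1) ^ (-t) - ((n + 1 : ℕ) + 1 : ℝ) ^ (-t)) := by
          refine Finset.sum_le_sum fun n _ => ?_
          have hb := rpow_le_add_one_rpow_sub_mul (p := 1 - t) (by linarith) (by linarith)
            (by positivity : (0 : ℝ) ≤ n + 1)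
          rw [show (1 - t - 1) = -t by ring] at hb
          simp only [a]
          push_cast
          rw [sub_le_sub_iff_left, le_div_iff₀ (by linarith)]
          linarith
      _ = 1 - ((N : ℝ) + 1) ^ (-t) := by
          rw [Finset.sum_range_sub' (fun n : ℕ => ((n : ℝ) + 1) ^ (-t))]
          simp
      _ ≤ 1 := by linarith [Real.rpow_nonneg (by positivity : (0 : ℝ) ≤ N + 1) (-t)]
  have hpole : 1 / (t - 1) ≤ -1 := by
    rw [div_le_iff_of_neg (by linarith)]; linarith
  have hcont : zetaCont t = ((1 / (t - 1) + ∑' n, a n : ℝ) : ℂ) := by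
    rw [zetaCont, tsum_congr ha, ← Complex.ofReal_tsum]
    push_cast
    rfl
  rw [riemannZeta_eq_zetaCont (by simpa) (by simpa), hcont, Complex.ofReal_re]
  linarith

lemma riemannZeta_re_nonpos_of_neg {s : ℝ} (hs2 : -2 ≤ s) (hs0 : s < 0) :
    (riemannZeta s).re ≤ 0 := by
  set u : ℝ := 1 - s
  have hfe := riemannZeta_one_sub (s := (u : ℂ))
    (fun n h => by
      have : u = -(n : ℝ) := by exact_mod_cast h
      linarith [(Nat.cast_nonneg n : (0 : ℝ) ≤ n)])
    (fun h => by
      have : u = 1 := by exact_mod_cast h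
      linarith)
  have hfactor :
      2 * (2 * (Real.pi : ℂ)) ^ (-(u : ℂ)) * Complex.Gamma u * Complex.cos (Real.pi * u / 2)
        = ((2 * (2 * Real.pi) ^ (-u) * Real.Gamma u * Real.cos (Real.pi * u / 2) : ℝ) : ℂ) := by
    push_cast
    rw [Complex.ofReal_cpow (by positivity), Complex.Gamma_ofReal]
    push_cast
    rfl
  have hcos : Real.cos (Real.pi * u / 2) ≤ 0 := by
    apply Real.cos_nonpos_of_pi_div_two_le_of_le <;> nlinarith [Real.pi_pos]
  have hprefactor : 2 * (2 * Real.pi) ^ (-u) * Real.Gamma u * Real.cos (Real.pi * u / 2) ≤ 0 :=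
    mul_nonpos_of_nonneg_of_nonpos (by
      have := Real.Gamma_pos_of_pos (by linarith : 0 < u)
      positivity) hcos
  rw [show (s : ℂ) = 1 - (u : ℂ) by push_cast [u]; ring, hfe, hfactor, Complex.re_ofReal_mul]
  exact mul_nonpos_of_nonpos_of_nonneg hprefactor (riemannZeta_re_pos_of_one_lt (by linarith)).le

lemma riemannZeta_re_nonpos {s : ℝ} (hs2 : -2 ≤ s) (hs1 : s < 1) : (riemannZeta s).re ≤ 0 := by
  rcases lt_trichotomy s 0 with hs0 | rfl | hs0
  · exact riemannZeta_re_nonpos_of_neg hs2 hs0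
  · norm_num [riemannZeta_zero]
  · exact riemannZeta_re_nonpos_of_pos hs0 hs1

lemma Cconst_pos {α : ℝ} (hα : 0 < α) (hα2 : α < 2) : 0 < Cconst α := by
  have := Real.Gamma_pos_of_pos (by linarith : 0 < (1 + α) / 2)
  have := Real.Gamma_pos_of_pos (by linarith : 0 < 1 - α / 2)
  have := Real.sqrt_pos.2 Real.pi_pos
  unfold Cconst
  positivity

section DoublePrimedSum

variable {a b : ℤ}

lemma dsum_nonneg {g : ℤ → ℝ} (hg : ∀ k, 0 ≤ g k) : 0 ≤ dsum a b g :=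
  Finset.sum_nonneg fun k _ => mul_nonneg (by split_ifs <;> norm_num) (hg k)

lemma dsum_le_sum {g : ℤ → ℝ} (hg : ∀ k, 0 ≤ g k) :
    dsum a b g ≤ ∑ k ∈ (Finset.Icc a b).erase 0, g k :=
  Finset.sum_le_sum fun k _ => mul_le_of_le_one_left (hg k) (by split_ifs <;> norm_num)

lemma dsum_sub (f g : ℤ → ℝ) : dsum a b (fun k => f k - g k) = dsum a b f - dsum a b g := by
  simp only [dsum, mul_sub, Finset.sum_sub_distrib]

lemma dsum_const_mul (x : ℝ) (g : ℤ → ℝ) : dsum a b (fun k => x * g k) = x * dsum a b g := by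
  simp only [dsum, Finset.mul_sum]
  exact Finset.sum_congr rfl fun k _ => by ring

lemma abs_dsum_mul_le {f w : ℤ → ℝ} {M : ℝ} (hw : ∀ k, 0 ≤ w k) (hf : ∀ k, |f k| ≤ M) :
    |dsum a b (fun k => f k * w k)| ≤ M * dsum a b w := by
  rw [← dsum_const_mul]
  refine (Finset.abs_sum_le_sum_abs _ _).trans (Finset.sum_le_sum fun k _ => ?_)
  have hc : (0 : ℝ) ≤ if k = a ∨ k = b then 1 / 2 else 1 := by split_ifs <;> norm_num
  rw [abs_mul, abs_mul, abs_of_nonneg hc, abs_of_nonneg (hw k)]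
  exact mul_le_mul_of_nonneg_left (mul_le_mul_of_nonneg_right (hf k) (hw k)) hc

end DoublePrimedSum

lemma sum_Icc_erase_zero_abs {a b : ℤ} (ha : a ≤ 0) (hb : 0 ≤ b) (f : ℤ → ℝ) :
    ∑ k ∈ (Finset.Icc a b).erase 0, f |k|
      = ∑ k ∈ Finset.Icc 1 (-a), f k + ∑ k ∈ Finset.Icc 1 b, f k := by
  have hsplit : (Finset.Icc a b).erase 0 = Finset.Icc a (-1) ∪ Finset.Icc 1 b := by
    ext k; simp only [Finset.mem_erase, Finset.mem_Icc, Finset.mem_union]; omega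
  rw [hsplit, Finset.sum_union (Finset.disjoint_left.2 fun k h1 h2 => by
    simp only [Finset.mem_Icc] at h1 h2; omega)]
  congr 1
  · refine Finset.sum_nbij' (fun k => -k) (fun k => -k) ?_ ?_ (fun k _ => neg_neg k)
      (fun k _ => neg_neg k) fun k hk => ?_
    · intro k hk; simp only [Finset.mem_Icc] at hk ⊢; omega
    · intro k hk; simp only [Finset.mem_Icc] at hk ⊢; omega
    · simp only [Finset.mem_Icc] at hk
      rw [abs_of_neg (by omega)]
  · exact Finset.sum_congr rfl fun k hk => by
      simp only [Finset.mem_Icc] at hk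
      rw [abs_of_pos (by omega)]

lemma mul_sum_rpow_add_rpow_le {α : ℝ} (hα : 0 ≤ α) {N : ℤ} (hN : 1 ≤ N) :
    α * ∑ k ∈ Finset.Icc 1 N, (k : ℝ) ^ (-α - 1) + (N : ℝ) ^ (-α) ≤ α + 1 := by
  induction N, hN using Int.leInduction with
  | base => norm_num
  | succ N hN ih =>
    have hstep := add_one_rpow_sub_mul_le_rpow (p := -α) (neg_nonpos.2 hα)
      (by exact_mod_cast hN : (0 : ℝ) < N)
    rw [← Finset.insert_Icc_right_eq_Icc_add_one (by omega), Finset.sum_insert (by simp)]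
    push_cast
    linarith

lemma fractional_kernel_mass_le {α h : ℝ} {J j : ℤ} (hα : 0 < α) (hh : h = 1 / J) (hj : |j| < J) :
    h * dsum (-J - j) (J - j) (fun k => (|(k : ℝ) * h| ^ (1 + α))⁻¹)
      + ((1 + j * h) ^ (-α) + (1 - j * h) ^ (-α)) / α ≤ 2 * (1 + 1 / α) * h ^ (-α) := by
  obtain ⟨hj1, hj2⟩ := abs_lt.1 hj
  have hJ : (0 : ℝ) < J := by exact_mod_cast (by omega : (0 : ℤ) < J)
  have hh0 : 0 < h := by rw [hh]; exact one_div_pos.2 hJ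
  set f : ℤ → ℝ := fun m => (m : ℝ) ^ (-α - 1)
  set H : ℝ := h ^ (-α)
  have hkernel : ∀ k : ℤ, h * (|(k : ℝ) * h| ^ (1 + α))⁻¹ = H * f |k| := by
    intro k
    rw [abs_mul, abs_of_pos hh0, Real.mul_rpow (abs_nonneg _) hh0.le, mul_inv,
      ← Real.rpow_neg (abs_nonneg _), ← Real.rpow_neg hh0.le, show -(1 + α) = -α - 1 by ring,
      Real.rpow_sub_one hh0.ne']
    simp only [H, f, Int.cast_abs]
    field_simp
  have hsum : h * dsum (-J - j) (J - j) (fun k => (|(k : ℝ) * h| ^ (1 + α))⁻¹)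
      ≤ H * (∑ k ∈ Finset.Icc 1 (J + j), f k + ∑ k ∈ Finset.Icc 1 (J - j), f k) := by
    rw [← dsum_const_mul]
    refine (dsum_le_sum fun k => by positivity).trans_eq ?_
    rw [Finset.sum_congr rfl fun k _ => hkernel k, ← Finset.mul_sum,
      sum_Icc_erase_zero_abs (by omega) (by omega), show -(-J - j) = J + j by ring]
  have hsides : (1 + j * h) ^ (-α) + (1 - j * h) ^ (-α)
      = H * (((J + j : ℤ) : ℝ) ^ (-α) + ((J - j : ℤ) : ℝ) ^ (-α)) := by
    have hplus : 1 + j * h = ((J + j : ℤ) : ℝ) * h := by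
      rw [hh]; push_cast; field_simp
    have hminus : 1 - j * h = ((J - j : ℤ) : ℝ) * h := by
      rw [hh]; push_cast; field_simp
    rw [hplus, hminus, Real.mul_rpow (by exact_mod_cast (by omega : (0 : ℤ) ≤ J + j)) hh0.le,
      Real.mul_rpow (by exact_mod_cast (by omega : (0 : ℤ) ≤ J - j)) hh0.le]
    ring
  have h1 := mul_sum_rpow_add_rpow_le hα.le (by omega : 1 ≤ J + j)
  have h2 := mul_sum_rpow_add_rpow_le hα.le (by omega : 1 ≤ J - j)
  have hH : 0 < H := Real.rpow_pos_of_pos hh0 _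
  rw [hsides]
  calc h * dsum (-J - j) (J - j) (fun k => (|(k : ℝ) * h| ^ (1 + α))⁻¹)
        + H * (((J + j : ℤ) : ℝ) ^ (-α) + ((J - j : ℤ) : ℝ) ^ (-α)) / α
      ≤ H / α * ((α * ∑ k ∈ Finset.Icc 1 (J + j), f k + ((J + j : ℤ) : ℝ) ^ (-α))
          + (α * ∑ k ∈ Finset.Icc 1 (J - j), f k + ((J - j : ℤ) : ℝ) ^ (-α))) := by
        refine (add_le_add_left hsum _).trans_eq ?_
        field_simp
        ring
    _ ≤ H / α * ((α + 1) + (α + 1)) :=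
        mul_le_mul_of_nonneg_left (add_le_add h1 h2) (by positivity)
    _ = 2 * (1 + 1 / α) * H := by field_simp; ring

/-- The right-hand side of the scheme, with `c = Δt ε C_α` and `z` in place of `ζ(α - 1)`. -/
noncomputable def absorbingStep (c z α h : ℝ) (J : ℤ) (u : ℤ → ℝ) (j : ℤ) : ℝ :=
  u j - c * z * h ^ (-α) * (u (j - 1) - 2 * u j + u (j + 1))
    - c / α * ((1 + (j : ℝ) * h) ^ (-α) + (1 - (j : ℝ) * h) ^ (-α)) * u j
    + c * h * dsum (-J - j) (J - j) (fun k => (u (j + k) - u j) / |(k : ℝ) * h| ^ (1 + α))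

lemma absorbing_mass_le_one {c z α h : ℝ} {J j : ℤ} (hα : 0 < α) (hc : 0 ≤ c) (hh : h = 1 / J)
    (hj : |j| < J) (hCFL : 2 * c * h ^ (-α) * (1 + 1 / α - z) ≤ 1) :
    2 * -(c * z * h ^ (-α)) + c / α * ((1 + (j : ℝ) * h) ^ (-α) + (1 - (j : ℝ) * h) ^ (-α))
      + c * h * dsum (-J - j) (J - j) (fun k => (|(k : ℝ) * h| ^ (1 + α))⁻¹) ≤ 1 := by
  calc _ = -2 * c * z * h ^ (-α) + c * (h * dsum (-J - j) (J - j)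
          (fun k => (|(k : ℝ) * h| ^ (1 + α))⁻¹)
            + ((1 + j * h) ^ (-α) + (1 - j * h) ^ (-α)) / α) := by
        ring
    _ ≤ -2 * c * z * h ^ (-α) + c * (2 * (1 + 1 / α) * h ^ (-α)) :=
        add_le_add le_rfl (mul_le_mul_of_nonneg_left (fractional_kernel_mass_le hα hh hj) hc)
    _ = 2 * c * h ^ (-α) * (1 + 1 / α - z) := by ring
    _ ≤ 1 := hCFL

lemma abs_absorbingStep_le {c z α h M : ℝ} {J j : ℤ} {u : ℤ → ℝ} (hα : 0 < α) (hc : 0 ≤ c)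
    (hz : z ≤ 0) (hh : h = 1 / J) (hj : |j| < J)
    (hCFL : 2 * c * h ^ (-α) * (1 + 1 / α - z) ≤ 1) (hu : ∀ i, |u i| ≤ M) :
    |absorbingStep c z α h J u j| ≤ M := by
  have hJ : (0 : ℝ) < J := by exact_mod_cast (abs_nonneg j).trans_lt hj
  have hh0 : 0 < h := by rw [hh]; exact one_div_pos.2 hJ
  have hjh : |(j : ℝ) * h| < 1 := by
    rw [hh, mul_one_div, abs_div, abs_of_pos hJ, div_lt_one hJ]; exact_mod_cast hj
  obtain ⟨hjh1, hjh2⟩ := abs_lt.1 hjh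
  have hmass := absorbing_mass_le_one hα hc hh hj hCFL
  set w : ℤ → ℝ := fun k => (|(k : ℝ) * h| ^ (1 + α))⁻¹
  have hw : ∀ k, 0 ≤ w k := fun k => by positivity
  set b := -(c * z * h ^ (-α))
  set d := c / α * ((1 + (j : ℝ) * h) ^ (-α) + (1 - (j : ℝ) * h) ^ (-α))
  set D := dsum (-J - j) (J - j) w
  have hb : 0 ≤ b := by
    have : 0 ≤ c * -z * h ^ (-α) := mul_nonneg (mul_nonneg hc (neg_nonneg.2 hz)) (by positivity)
    simpa [b] using this
  have hd : 0 ≤ d := by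
    have := Real.rpow_nonneg (by linarith : 0 ≤ 1 + (j : ℝ) * h) (-α)
    have := Real.rpow_nonneg (by linarith : 0 ≤ 1 - (j : ℝ) * h) (-α)
    positivity
  have hD : 0 ≤ D := dsum_nonneg hw
  have hrep : absorbingStep c z α h J u j = (1 - 2 * b - d - c * h * D) * u j
      + b * (u (j - 1) + u (j + 1)) + c * h * dsum (-J - j) (J - j) (fun k => u (j + k) * w k) := by
    have hsplit : dsum (-J - j) (J - j) (fun k => (u (j + k) - u j) / |(k : ℝ) * h| ^ (1 + α))
        = dsum (-J - j) (J - j) (fun k => u (j + k) * w k) - u j * D := by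
      rw [← dsum_const_mul, ← dsum_sub]
      simp only [w, div_eq_mul_inv, sub_mul]
    rw [absorbingStep, hsplit]
    ring
  have hM : 0 ≤ M := (abs_nonneg _).trans (hu 0)
  rw [hrep]
  calc _ ≤ |(1 - 2 * b - d - c * h * D) * u j| + |b * (u (j - 1) + u (j + 1))|
        + |c * h * dsum (-J - j) (J - j) (fun k => u (j + k) * w k)| := abs_add_three _ _ _
    _ ≤ (1 - 2 * b - d - c * h * D) * M + b * (M + M) + c * h * (M * D) := by
        rw [abs_mul, abs_mul, abs_mul, abs_of_nonneg (by linarith : 0 ≤ 1 - 2 * b - d - c * h * D),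
          abs_of_nonneg hb, abs_of_nonneg (by positivity : 0 ≤ c * h)]
        gcongr
        · linarith
        · exact hu j
        · exact (abs_add_le _ _).trans (add_le_add (hu _) (hu _))
        · exact abs_dsum_mul_le hw fun k => hu (j + k)
    _ = M - d * M := by ring
    _ ≤ M := by linarith [mul_nonneg hd hM]

lemma bddAbove_range_abs_of_eq_zero {u : ℤ → ℝ} {J : ℤ} (hu : ∀ j, J ≤ |j| → u j = 0) :
    BddAbove (Set.range fun j => |u j|) := by
  refine ((((Finset.Ioo (-J) J).image fun j => |u j|) : Set ℝ).toFinite.insert 0).bddAbove.mono ?_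
  rintro _ ⟨j, rfl⟩
  rcases lt_or_ge |j| J with hj | hj
  · exact Or.inr (Finset.mem_coe.2 (Finset.mem_image_of_mem _ (Finset.mem_Ioo.2 (abs_lt.1 hj))))
  · exact Or.inl (by simp [hu j hj])

theorem stmt_10_general (α ε h Δt : ℝ) (J : ℤ)
    (hα : 0 < α) (hα2 : α < 2) (hε : 0 < ε)
    (hh : h = 1 / (J : ℝ)) (hΔt : 0 < Δt)
    (P : ℕ → ℤ → ℝ)
    (hbc : ∀ n : ℕ, ∀ j : ℤ, J ≤ |j| → P n j = 0)
    (hscheme : ∀ n : ℕ, ∀ j : ℤ, |j| < J →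
      P (n + 1) j =
        P n j
          - Δt * ε * Cconst α * zetaR (α - 1) * h ^ (-α) *
              (P n (j - 1) - 2 * P n j + P n (j + 1))
          - Δt * ε * Cconst α / α *
              ((1 + (j : ℝ) * h) ^ (-α) + (1 - (j : ℝ) * h) ^ (-α)) * P n j
          + Δt * ε * Cconst α * h *
              dsum (-J - j) (J - j)
                (fun k => (P n (j + k) - P n j) / |(k : ℝ) * h| ^ (1 + α)))
    (hCFL : Δt / h ^ α ≤ 1 / (2 * ε * Cconst α * (1 + 1 / α - zetaR (α - 1)))) :
    ∀ n : ℕ, (⨆ j : ℤ, |P (n + 1) j|) ≤ ⨆ j : ℤ, |P n j| := by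
  have hC := Cconst_pos hα hα2
  have hz : zetaR (α - 1) ≤ 0 := riemannZeta_re_nonpos (by linarith) (by linarith)
  intro n
  have hbdd := bddAbove_range_abs_of_eq_zero (hbc n)
  refine ciSup_le fun j => ?_
  rcases lt_or_ge |j| J with hj | hj
  · have hh0 : 0 < h := by
      rw [hh]; exact one_div_pos.2 (by exact_mod_cast (abs_nonneg j).trans_lt hj)
    have hK : 0 < 2 * ε * Cconst α * (1 + 1 / α - zetaR (α - 1)) := by
      have : 0 < 1 / α := by positivity
      exact mul_pos (by positivity) (by linarith)
    have hCFL' : 2 * (Δt * ε * Cconst α) * h ^ (-α) * (1 + 1 / α - zetaR (α - 1)) ≤ 1 := by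
      rw [Real.rpow_neg hh0.le]
      calc _ = Δt / h ^ α * (2 * ε * Cconst α * (1 + 1 / α - zetaR (α - 1))) := by ring
        _ ≤ 1 := (le_div_iff₀ hK).1 hCFL
    rw [hscheme n j hj]
    exact abs_absorbingStep_le hα (by positivity) hz hh hj hCFL' fun i => le_ciSup hbdd i
  · rw [hbc (n + 1) j hj, abs_zero]
    exact (abs_nonneg _).trans (le_ciSup hbdd 0)

/-- Maximum-norm stability of the explicit Euler scheme for the absorbing condition. -/
theorem stmt_10 (α ε h Δt : ℝ) (J : ℤ)
    (hα : 0 < α) (hα2 : α < 2) (hε : 0 < ε) (hJ : 1 ≤ J)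
    (hh : h = 1 / (J : ℝ)) (hΔt : 0 < Δt)
    (P : ℕ → ℤ → ℝ)
    (hbc : ∀ n : ℕ, ∀ j : ℤ, J ≤ |j| → P n j = 0)
    (hscheme : ∀ n : ℕ, ∀ j : ℤ, |j| < J →
      P (n + 1) j =
        P n j
          - Δt * ε * Cconst α * zetaR (α - 1) * h ^ (-α) *
              (P n (j - 1) - 2 * P n j + P n (j + 1))
          - Δt * ε * Cconst α / α *
              ((1 + (j : ℝ) * h) ^ (-α) + (1 - (j : ℝ) * h) ^ (-α)) * P n j
          + Δt * ε * Cconst α * h *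
              dsum (-J - j) (J - j)
                (fun k => (P n (j + k) - P n j) / |(k : ℝ) * h| ^ (1 + α)))
    (hCFL : Δt / h ^ α ≤ 1 / (2 * ε * Cconst α * (1 + 1 / α - zetaR (α - 1)))) :
    ∀ n : ℕ, (⨆ j : ℤ, |P (n + 1) j|) ≤ ⨆ j : ℤ, |P n j| :=
  stmt_10_general α ε h Δt J hα hα2 hε hh hΔt P hbc hscheme hCFL
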